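/- Let $g \geq 4$ be an integer and let $k_1,\dots,k_{2g+1}$ be nonnegative integers with at least two of them nonzero. Set $s_1 = \sum_i k_i$, $s_2 = \sum_{i<j} k_i k_j$, $a_2 = \tfrac{1}{2}g(g+1) + g s_1 + s_2$, $v_3 = \tfrac{1}{2}\left(\tfrac{g(g+1)(2g+1)}{3} + g(2g+1)s_1 + g s_1^2 + 2g s_2 + s_1 s_2 + s_3\right)$ where $s_3 = \sum_{i<j<\ell} k_i k_j k_\ell$, and $V = g - \tfrac{3}{2} + \tfrac{1}{2}\sum_{m=0}^{2g} 2^m(2g+1-m)s_m$ where $s_m$ is the $m$-th elementary symmetric polynomial in the $k_i$. Then $v_3 \cdot (V + 2g - 1) > 7 a_2^2$. -/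

import Mathlib

/-! After the substitution `g = 4 + G`, `s₁ = 2 + X`, `s₂ = 1 + Y`, the difference
`v₃' W - 7 a₂²` becomes a polynomial in `G, X, Y ≥ 0` with positive coefficients, where `v₃'`
is `v₃` without the term `s₃ ≥ 0` and `W = 4g - 2 + 2g s₁ + (4g - 2) s₂` is the lower bound for
`V + 2g - 1` obtained by keeping only the terms `m ≤ 2` of the sum defining `V`. -/

/-- The `m`-th elementary symmetric polynomial in the variables `x 0, …, x (N-1)`. -/
def esymm (N m : ℕ) (x : ℕ → ℚ) : ℚ :=
  ∑ t ∈ (Finset.range N).powersetCard m, ∏ j ∈ t, x j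

section Esymm

variable {N : ℕ} {x : ℕ → ℚ}

@[simp]
lemma esymm_zero : esymm N 0 x = 1 := by
  simp [esymm]

lemma esymm_one : esymm N 1 x = ∑ i ∈ Finset.range N, x i := by
  simp [esymm, Finset.powersetCard_one]

lemma esymm_nonneg (m : ℕ) (hx : ∀ i, 0 ≤ x i) : 0 ≤ esymm N m x :=
  Finset.sum_nonneg fun _ _ => Finset.prod_nonneg fun j _ => hx j

lemma prod_le_esymm {m : ℕ} {t : Finset ℕ} (ht : t ∈ (Finset.range N).powersetCard m)
    (hx : ∀ i, 0 ≤ x i) : ∏ j ∈ t, x j ≤ esymm N m x :=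
  Finset.single_le_sum (f := fun t => ∏ j ∈ t, x j)
    (fun _ _ => Finset.prod_nonneg fun j _ => hx j) ht

lemma add_le_esymm_one {i j : ℕ} (hi : i < N) (hj : j < N) (hij : i ≠ j)
    (hx : ∀ i, 0 ≤ x i) : x i + x j ≤ esymm N 1 x := by
  rw [esymm_one, ← Finset.sum_pair hij]
  refine Finset.sum_le_sum_of_subset_of_nonneg ?_ fun l _ _ => hx l
  simp [Finset.insert_subset_iff, hi, hj]

lemma mul_le_esymm_two {i j : ℕ} (hi : i < N) (hj : j < N) (hij : i ≠ j)
    (hx : ∀ i, 0 ≤ x i) : x i * x j ≤ esymm N 2 x := by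
  rw [← Finset.prod_pair hij]
  refine prod_le_esymm ?_ hx
  simp [Finset.mem_powersetCard, Finset.insert_subset_iff, hi, hj, Finset.card_pair hij]

lemma le_weighted_sum_esymm (hN : 3 ≤ N) (hx : ∀ i, 0 ≤ x i) :
    (N : ℚ) + 2 * (N - 1) * esymm N 1 x + 4 * (N - 2) * esymm N 2 x
      ≤ ∑ m ∈ Finset.range N, 2 ^ m * ((N - m : ℕ) : ℚ) * esymm N m x := by
  have hfirst : ∑ m ∈ Finset.range 3, 2 ^ m * ((N - m : ℕ) : ℚ) * esymm N m x
      = (N : ℚ) + 2 * (N - 1) * esymm N 1 x + 4 * (N - 2) * esymm N 2 x := by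
    simp only [Finset.sum_range_succ, Finset.sum_range_zero, Nat.sub_zero]
    push_cast [show 1 ≤ N by omega, show 2 ≤ N by omega]
    simp only [esymm_zero]
    ring
  rw [← hfirst]
  refine Finset.sum_le_sum_of_subset_of_nonneg (Finset.range_subset_range.2 hN) fun m _ _ => ?_
  have := esymm_nonneg (N := N) m hx
  positivity

end Esymm

lemma pretzel_polynomial_ineq (g s₁ s₂ : ℚ) (hg : 4 ≤ g) (hs₁ : 2 ≤ s₁) (hs₂ : 1 ≤ s₂) :
    7 * ((1 / 2) * g * (g + 1) + g * s₁ + s₂) ^ 2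
      < (1 / 2) * (g * (g + 1) * (2 * g + 1) / 3 + g * (2 * g + 1) * s₁
          + g * s₁ ^ 2 + 2 * g * s₂ + s₁ * s₂)
        * (4 * g - 2 + 2 * g * s₁ + (4 * g - 2) * s₂) := by
  obtain ⟨G, hG, rfl⟩ : ∃ G, 0 ≤ G ∧ g = 4 + G := ⟨g - 4, by linarith, by ring⟩
  obtain ⟨X, hX, rfl⟩ : ∃ X, 0 ≤ X ∧ s₁ = 2 + X := ⟨s₁ - 2, by linarith, by ring⟩
  obtain ⟨Y, hY, rfl⟩ : ∃ Y, 0 ≤ Y ∧ s₂ = 1 + Y := ⟨s₂ - 1, by linarith, by ring⟩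
  rw [← sub_pos]
  ring_nf
  positivity

/-- For `g ≥ 4` and nonnegative integers `k_1,…,k_{2g+1}` with at least two nonzero,
`v₃ (V + 2g - 1) > 7 a₂²`. -/
theorem pretzel_inequality (g : ℕ) (hg : 4 ≤ g) (k : ℕ → ℕ)
    (htwo : ∃ i j, i < 2 * g + 1 ∧ j < 2 * g + 1 ∧ i ≠ j ∧ k i ≠ 0 ∧ k j ≠ 0) :
    let kq : ℕ → ℚ := fun i => (k i : ℚ)
    let s1 : ℚ := esymm (2 * g + 1) 1 kq
    let s2 : ℚ := esymm (2 * g + 1) 2 kq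
    let s3 : ℚ := esymm (2 * g + 1) 3 kq
    let a2 : ℚ := (1 / 2) * g * (g + 1) + g * s1 + s2
    let v3 : ℚ := (1 / 2) * (g * (g + 1) * (2 * g + 1) / 3 + g * (2 * g + 1) * s1
      + g * s1 ^ 2 + 2 * g * s2 + s1 * s2 + s3)
    let V : ℚ := g - 3 / 2
      + (1 / 2) * ∑ m ∈ Finset.range (2 * g + 1),
          2 ^ m * ((2 * g + 1 - m : ℕ) : ℚ) * esymm (2 * g + 1) m kq
    v3 * (V + 2 * g - 1) > 7 * a2 ^ 2 := by
  intro kq s1 s2 s3 a2 v3 V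
  obtain ⟨i, j, hi, hj, hij, hki, hkj⟩ := htwo
  have hkq : ∀ l, 0 ≤ kq l := fun l => Nat.cast_nonneg _
  have hxi : (1 : ℚ) ≤ kq i := Nat.one_le_cast.2 (Nat.one_le_iff_ne_zero.2 hki)
  have hxj : (1 : ℚ) ≤ kq j := Nat.one_le_cast.2 (Nat.one_le_iff_ne_zero.2 hkj)
  have hgq : (4 : ℚ) ≤ g := by exact_mod_cast hg
  have hs1 : 2 ≤ s1 := by linarith [add_le_esymm_one hi hj hij hkq]
  have hs2 : 1 ≤ s2 := by nlinarith [mul_le_esymm_two hi hj hij hkq]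
  have hs3 : 0 ≤ s3 := esymm_nonneg 3 hkq
  have hV : 4 * (g : ℚ) - 2 + 2 * g * s1 + (4 * g - 2) * s2 ≤ V + 2 * g - 1 := by
    have := le_weighted_sum_esymm (N := 2 * g + 1) (by omega) hkq
    push_cast at this
    simp only [V]
    linarith
  have hW : 0 ≤ 4 * (g : ℚ) - 2 + 2 * g * s1 + (4 * g - 2) * s2 := by nlinarith
  have hv3 : 0 ≤ v3 := by positivity
  calc 7 * a2 ^ 2
      < (1 / 2) * (g * (g + 1) * (2 * g + 1) / 3 + g * (2 * g + 1) * s1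
          + g * s1 ^ 2 + 2 * g * s2 + s1 * s2) * (4 * g - 2 + 2 * g * s1 + (4 * g - 2) * s2) :=
        pretzel_polynomial_ineq g s1 s2 hgq hs1 hs2
    _ ≤ v3 * (4 * g - 2 + 2 * g * s1 + (4 * g - 2) * s2) := 
        mul_le_mul_of_nonneg_right (by simp only [v3]; linarith) hW
    _ ≤ v3 * (V + 2 * g - 1) := by gcongr
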